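/- arXiv:1505.00680 — 3 statements merged into one kernel-verified Lean document; each statement's English description precedes it below -/
import Mathlib

section
/- For integers N ≥ 2 and L_max ≥ 1, the number of Clenshaw-Curtis sparse grid points satisfies M_{L_max} ≤ Σ_{L=1}^{L_max} 2^L·C(N-1+L, N-1) ≤ e^{N-1}·2^{L_max+1}·(1 + L_max/(N-1))^{N-1}. -/
open Finset

/-!
Every binomial coefficient in the sum is at most the last one, `C(k + L_max, k)` with
`k = N - 1`, and the powers of two sum to less than `2^(L_max+1)`. The last coefficient is at
most `(k + L_max)^k / k!`, and `k^k / k! ≤ e^k` (a single term of the exponential series)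
turns this into `e^k (1 + L_max / k)^k`.
-/

lemma Nat.choose_add_le_exp_mul_one_add_div_pow (k m : ℕ) :
    ((k + m).choose k : ℝ) ≤ Real.exp 1 ^ k * (1 + (m : ℝ) / k) ^ k := by
  rcases k.eq_zero_or_pos with rfl | hk
  · simp
  have hk' : (k : ℝ) ≠ 0 := by positivity
  calc ((k + m).choose k : ℝ) ≤ ((k + m : ℕ) : ℝ) ^ k / k.factorial := Nat.choose_le_pow_div k _
    _ = (1 + (m : ℝ) / k) ^ k * ((k : ℝ) ^ k / k.factorial) := by
        rw [← mul_div_assoc, ← mul_pow, one_add_div hk', div_mul_cancel₀ _ hk', Nat.cast_add]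
    _ ≤ (1 + (m : ℝ) / k) ^ k * Real.exp k := by
        gcongr
        exact Real.pow_div_factorial_le_exp (k : ℝ) k.cast_nonneg k
    _ = Real.exp 1 ^ k * (1 + (m : ℝ) / k) ^ k := by
        rw [← Real.exp_one_pow, mul_comm]

lemma sum_Icc_two_pow_lt (n : ℕ) : ∑ L ∈ Icc 1 n, (2 : ℝ) ^ L < 2 ^ (n + 1) := by
  exact_mod_cast Nat.geomSum_lt le_rfl fun L hL => Nat.lt_succ_of_le (mem_Icc.mp hL).2

lemma sum_Icc_two_pow_mul_choose_le (k n : ℕ) :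
    ∑ L ∈ Icc 1 n, (2 : ℝ) ^ L * ((k + L).choose k : ℝ) ≤
      2 ^ (n + 1) * ((k + n).choose k : ℝ) :=
  calc ∑ L ∈ Icc 1 n, (2 : ℝ) ^ L * ((k + L).choose k : ℝ)
      ≤ ∑ L ∈ Icc 1 n, (2 : ℝ) ^ L * ((k + n).choose k : ℝ) := by
        gcongr with L hL
        exact (mem_Icc.mp hL).2
    _ = (∑ L ∈ Icc 1 n, (2 : ℝ) ^ L) * ((k + n).choose k : ℝ) := (sum_mul ..).symm
    _ ≤ 2 ^ (n + 1) * ((k + n).choose k : ℝ) := by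
        gcongr
        exact (sum_Icc_two_pow_lt n).le

theorem sparse_grid_point_count_general (N Lmax M : ℕ) (hN : 2 ≤ N)
    (hM : (M : ℝ) ≤ ∑ L ∈ Finset.Icc 1 Lmax,
      (2 : ℝ) ^ L * ((N - 1 + L).choose (N - 1) : ℝ)) :
    (∑ L ∈ Finset.Icc 1 Lmax, (2 : ℝ) ^ L * ((N - 1 + L).choose (N - 1) : ℝ)) ≤
        Real.exp 1 ^ (N - 1) * 2 ^ (Lmax + 1) *
          (1 + (Lmax : ℝ) / ((N : ℝ) - 1)) ^ (N - 1) ∧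
      (M : ℝ) ≤ Real.exp 1 ^ (N - 1) * 2 ^ (Lmax + 1) *
          (1 + (Lmax : ℝ) / ((N : ℝ) - 1)) ^ (N - 1) := by
  rw [← Nat.cast_pred (by omega : 0 < N)]
  have hsum := (sum_Icc_two_pow_mul_choose_le (N - 1) Lmax).trans <|
    mul_le_mul_of_nonneg_left (Nat.choose_add_le_exp_mul_one_add_div_pow (N - 1) Lmax)
      (by positivity)
  rw [mul_left_comm, ← mul_assoc] at hsum
  exact ⟨hsum, hM.trans hsum⟩

/-- Sparse-grid point count bound:
`M_{L_max} ≤ ∑_{L=1}^{L_max} 2^L·C(N-1+L, N-1) ≤ e^{N-1}·2^{L_max+1}·(1+L_max/(N-1))^{N-1}`. -/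
theorem sparse_grid_point_count (N Lmax M : ℕ) (hN : 2 ≤ N) (hL : 1 ≤ Lmax)
    (hM : (M : ℝ) ≤ ∑ L ∈ Finset.Icc 1 Lmax,
      (2 : ℝ) ^ L * ((N - 1 + L).choose (N - 1) : ℝ)) :
    (∑ L ∈ Finset.Icc 1 Lmax, (2 : ℝ) ^ L * ((N - 1 + L).choose (N - 1) : ℝ)) ≤
        Real.exp 1 ^ (N - 1) * 2 ^ (Lmax + 1) *
          (1 + (Lmax : ℝ) / ((N : ℝ) - 1)) ^ (N - 1) ∧
      (M : ℝ) ≤ Real.exp 1 ^ (N - 1) * 2 ^ (Lmax + 1) *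
          (1 + (Lmax : ℝ) / ((N : ℝ) - 1)) ^ (N - 1) :=
  sparse_grid_point_count_general N Lmax M hN hM
end

section
/- Let N ≥ 2, M_h ≥ 1, and L_max ≥ 2 be integers, and suppose the number of sparse-grid points satisfies ΔM_L ≤ 2^L·C(N-1+L, N-1) at each level L and M_{L-1} ≤ Σ_{l=1}^{L-1} 2^l·C(N-1+l,N-1). Then the total interpolation cost C_int = 2·M_h·Σ_{L=2}^{L_max} ΔM_L·M_{L-1} is bounded by 16·M_h·e^{2(N-1)}·4^{L_max}·(1 + L_max/(N-1))^{2(N-1)}. -/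
open Finset
open Nat

lemma aux_pow_fact (k : ℕ) : (k : ℝ) ^ k ≤ Real.exp k * k ! := by
  have h1 : (k : ℝ) ^ k / k ! ≤ ∑ i ∈ Finset.range (k + 1), (k : ℝ) ^ i / i ! :=
    Finset.single_le_sum (f := fun i => (k : ℝ) ^ i / i !)
      (fun i _ => by positivity) (Finset.self_mem_range_succ k)
  have h2 := Real.sum_le_exp_of_nonneg (x := (k : ℝ)) (Nat.cast_nonneg k) (k + 1)
  have hf : (0 : ℝ) < k ! := by positivity
  rw [div_le_iff₀ hf] at h1
  calc (k : ℝ) ^ k ≤ (∑ i ∈ Finset.range (k + 1), (k : ℝ) ^ i / i !) * k ! := h1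
    _ ≤ Real.exp k * k ! := by
        exact mul_le_mul_of_nonneg_right h2 hf.le

lemma aux_choose (k m : ℕ) (hk : 1 ≤ k) :
    ((m + k).choose k : ℝ) ≤ Real.exp 1 ^ k * (1 + (m : ℝ) / k) ^ k := by
  have hkpos : (0 : ℝ) < k := by exact_mod_cast hk
  have h1 : ((m + k).choose k : ℝ) ≤ ((m + k : ℕ) ^ k : ℝ) / k ! :=
    Nat.choose_le_pow_div k (m + k)
  have hsplit : ((m + k : ℕ) : ℝ) = (1 + (m : ℝ) / k) * k := by
    field_simp
    push_cast
    ring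
  have hf : (0 : ℝ) < k ! := by positivity
  calc ((m + k).choose k : ℝ) ≤ ((m + k : ℕ) : ℝ) ^ k / k ! := by push_cast at h1 ⊢; exact h1
    _ = (1 + (m : ℝ) / k) ^ k * ((k : ℝ) ^ k / k !) := by
        rw [hsplit, mul_pow]; ring
    _ ≤ (1 + (m : ℝ) / k) ^ k * Real.exp k := by
        apply mul_le_mul_of_nonneg_left _ (by positivity)
        rw [div_le_iff₀ hf]
        exact aux_pow_fact k
    _ = Real.exp 1 ^ k * (1 + (m : ℝ) / k) ^ k := by
        rw [Real.exp_one_pow, mul_comm]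

/-- Interpolation cost bound (Theorem 4.10): with `ΔM_L ≤ 2^L·C(N-1+L,N-1)` and
`M_{L-1} ≤ ∑_{l=1}^{L-1} 2^l·C(N-1+l,N-1)`, the total interpolation cost
`2·M_h·∑_{L=2}^{L_max} ΔM_L·M_{L-1}` is at most
`16·M_h·e^{2(N-1)}·4^{L_max}·(1+L_max/(N-1))^{2(N-1)}`. -/
theorem interpolation_cost_bound (N Mh Lmax : ℕ) (hN : 2 ≤ N) (hMh : 1 ≤ Mh)
    (hLmax : 2 ≤ Lmax) (ΔM M : ℕ → ℕ)
    (hΔ : ∀ L : ℕ, (ΔM L : ℝ) ≤ (2 : ℝ) ^ L * ((N - 1 + L).choose (N - 1) : ℝ))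
    (hM : ∀ L : ℕ, 1 ≤ L →
      (M (L - 1) : ℝ) ≤ ∑ l ∈ Finset.Icc 1 (L - 1),
        (2 : ℝ) ^ l * ((N - 1 + l).choose (N - 1) : ℝ)) :
    2 * (Mh : ℝ) * ∑ L ∈ Finset.Icc 2 Lmax, (ΔM L : ℝ) * (M (L - 1) : ℝ) ≤
      16 * (Mh : ℝ) * Real.exp 1 ^ (2 * (N - 1)) * 4 ^ Lmax *
        (1 + (Lmax : ℝ) / ((N : ℝ) - 1)) ^ (2 * (N - 1)) := by
  set k := N - 1 with hkdef
  have hk : 1 ≤ k := by omega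
  have hcast : (N : ℝ) - 1 = (k : ℝ) := by
    rw [hkdef, Nat.cast_sub (by omega : 1 ≤ N)]; norm_num
  rw [hcast]
  set B : ℝ := Real.exp 1 ^ k * (1 + (Lmax : ℝ) / k) ^ k with hBdef
  have hkpos : (0 : ℝ) < k := by exact_mod_cast hk
  have hB0 : 0 ≤ B := by positivity
  have hC : ∀ L : ℕ, L ≤ Lmax → ((k + L).choose k : ℝ) ≤ B := by
    intro L hL
    have h1 : ((k + L).choose k : ℝ) ≤ ((Lmax + k).choose k : ℝ) := by
      exact_mod_cast Nat.choose_le_choose k (by omega : k + L ≤ Lmax + k)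
    exact h1.trans (aux_choose k Lmax hk)
  -- per-term bounds
  have hterm : ∀ L ∈ Finset.Icc 2 Lmax,
      (ΔM L : ℝ) * (M (L - 1) : ℝ) ≤ (4 : ℝ) ^ L * B ^ 2 := by
    intro L hL
    rw [Finset.mem_Icc] at hL
    have hΔ' : (ΔM L : ℝ) ≤ (2 : ℝ) ^ L * B :=
      (hΔ L).trans (mul_le_mul_of_nonneg_left (hC L hL.2) (by positivity))
    have hM' : (M (L - 1) : ℝ) ≤ (2 : ℝ) ^ L * B := by
      refine (hM L (by omega)).trans ?_
      have h2 : ∑ l ∈ Finset.Icc 1 (L - 1), (2 : ℝ) ^ l * ((k + l).choose k : ℝ) ≤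
          ∑ l ∈ Finset.Icc 1 (L - 1), (2 : ℝ) ^ l * B := by
        refine Finset.sum_le_sum fun l hl => ?_
        rw [Finset.mem_Icc] at hl
        exact mul_le_mul_of_nonneg_left (hC l (by omega)) (by positivity)
      refine h2.trans ?_
      rw [← Finset.sum_mul]
      refine mul_le_mul_of_nonneg_right ?_ hB0
      calc ∑ l ∈ Finset.Icc 1 (L - 1), (2 : ℝ) ^ l
          ≤ ∑ l ∈ Finset.range L, (2 : ℝ) ^ l := by
            refine Finset.sum_le_sum_of_subset_of_nonneg ?_ (fun i _ _ => by positivity)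
            intro l hl
            rw [Finset.mem_Icc] at hl
            rw [Finset.mem_range]
            omega
        _ = ((2 : ℝ) ^ L - 1) / (2 - 1) := geom_sum_eq (by norm_num) L
        _ ≤ (2 : ℝ) ^ L := by norm_num
    calc (ΔM L : ℝ) * (M (L - 1) : ℝ) ≤ ((2 : ℝ) ^ L * B) * ((2 : ℝ) ^ L * B) :=
          mul_le_mul hΔ' hM' (Nat.cast_nonneg _) (by positivity)
      _ = (4 : ℝ) ^ L * B ^ 2 := by
          rw [show (4 : ℝ) ^ L = 2 ^ L * 2 ^ L by rw [← mul_pow]; norm_num]; ring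
  have hsum : ∑ L ∈ Finset.Icc 2 Lmax, (ΔM L : ℝ) * (M (L - 1) : ℝ) ≤
      (4 : ℝ) ^ Lmax * 2 * B ^ 2 := by
    calc ∑ L ∈ Finset.Icc 2 Lmax, (ΔM L : ℝ) * (M (L - 1) : ℝ)
        ≤ ∑ L ∈ Finset.Icc 2 Lmax, (4 : ℝ) ^ L * B ^ 2 := Finset.sum_le_sum hterm
      _ = (∑ L ∈ Finset.Icc 2 Lmax, (4 : ℝ) ^ L) * B ^ 2 := by rw [Finset.sum_mul]
      _ ≤ (∑ L ∈ Finset.range (Lmax + 1), (4 : ℝ) ^ L) * B ^ 2 := by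
          refine mul_le_mul_of_nonneg_right ?_ (by positivity)
          refine Finset.sum_le_sum_of_subset_of_nonneg ?_ (fun i _ _ => by positivity)
          intro l hl
          rw [Finset.mem_Icc] at hl
          rw [Finset.mem_range]
          omega
      _ = (((4 : ℝ) ^ (Lmax + 1) - 1) / (4 - 1)) * B ^ 2 := by
          rw [geom_sum_eq (by norm_num)]
      _ ≤ (4 : ℝ) ^ Lmax * 2 * B ^ 2 := by
          refine mul_le_mul_of_nonneg_right ?_ (by positivity)
          rw [pow_succ]
          have : (0:ℝ) < 4 ^ Lmax := by positivity
          nlinarith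
  have hB2 : B ^ 2 = Real.exp 1 ^ (2 * k) * (1 + (Lmax : ℝ) / k) ^ (2 * k) := by
    rw [hBdef, mul_pow, ← pow_mul, ← pow_mul, mul_comm k 2]
  have hMh' : (0 : ℝ) ≤ (Mh : ℝ) := Nat.cast_nonneg _
  calc 2 * (Mh : ℝ) * ∑ L ∈ Finset.Icc 2 Lmax, (ΔM L : ℝ) * (M (L - 1) : ℝ)
      ≤ 2 * (Mh : ℝ) * ((4 : ℝ) ^ Lmax * 2 * B ^ 2) := by
        refine mul_le_mul_of_nonneg_left hsum (by positivity)
    _ ≤ 16 * (Mh : ℝ) * Real.exp 1 ^ (2 * k) * 4 ^ Lmax *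
        (1 + (Lmax : ℝ) / k) ^ (2 * k) := by
        rw [hB2]
        have h4 : (0:ℝ) ≤ 4 ^ Lmax := by positivity
        have he : (0:ℝ) ≤ Real.exp 1 ^ (2*k) * (1 + (Lmax : ℝ) / k) ^ (2 * k) := by positivity
        nlinarith [mul_nonneg (mul_nonneg hMh' h4) he]
end

section
/- Suppose ||u_h - I_{L-1}[u_h]||_∞ ≤ C_sc·e^{-rN·2^{(L-1)/N}} and ||I_{L-1}[u_h] - ũ_{L-1}||_∞ ≤ (1/√β)·(L+1)^{2N}·τ, where τ ≤ √β·C_sc·e^{-rN·2^{(L-1)/N}}/(L+1)^{2N}. Then with accelerated initial vector c^{(0)}(y) = ũ_{L-1}(y), the initial energy-norm error satisfies ||c(y) - c^{(0)}(y)||_{A(y)} ≤ 2√α·C_sc·e^{-rN·2^{(L-1)/N}} for every y, where α is the continuity constant. -/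
/-! The energy error is at most `√α` times the pointwise error `‖u - ũ‖`, which the triangle
inequality through `I[u]` splits into the interpolation error and the solver error. The
tolerance condition on `τ` is chosen exactly so that the solver error, amplified by the
Lebesgue constant `(L+1)^{2N}` and by `1/√β`, is no larger than the interpolation bound; the
total is therefore twice that bound. -/

lemma one_div_mul_mul_le_of_le_mul_div {s K τ E : ℝ} (hs : 0 < s) (hK : 0 < K)
    (hτ : τ ≤ s * E / K) : 1 / s * K * τ ≤ E :=
  calc 1 / s * K * τ ≤ 1 / s * K * (s * E / K) := by gcongr
    _ = E := by field_simp

lemma norm_sub_le_two_mul_of_le {W : Type*} [SeminormedAddCommGroup W] {a b c : W} {E : ℝ}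
    (hab : ‖a - b‖ ≤ E) (hbc : ‖b - c‖ ≤ E) : ‖a - c‖ ≤ 2 * E :=
  calc ‖a - c‖ ≤ ‖a - b‖ + ‖b - c‖ := norm_sub_le_norm_sub_add_norm_sub a b c
    _ ≤ 2 * E := by linarith

theorem accel_initial_energy_error_general {Γ : Type*} {W : Type*} [NormedAddCommGroup W]
    (u I ut : Γ → W) (e : Γ → ℝ) (α β Csc r τ : ℝ) (N L : ℕ)
    (hβ : 0 < β)
    (hinterp : ∀ y : Γ, ‖u y - I y‖ ≤
      Csc * Real.exp (-r * N * (2 : ℝ) ^ (((L : ℝ) - 1) / N)))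
    (hsolver : ∀ y : Γ, ‖I y - ut y‖ ≤
      (1 / Real.sqrt β) * ((L : ℝ) + 1) ^ (2 * N) * τ)
    (hτ : τ ≤ Real.sqrt β * Csc * Real.exp (-r * N * (2 : ℝ) ^ (((L : ℝ) - 1) / N)) /
      ((L : ℝ) + 1) ^ (2 * N))
    (hE : ∀ y : Γ, e y ≤ Real.sqrt α * ‖u y - ut y‖) :
    ∀ y : Γ, e y ≤ 2 * Real.sqrt α * Csc *
      Real.exp (-r * N * (2 : ℝ) ^ (((L : ℝ) - 1) / N)) := by
  intro y
  set E := Csc * Real.exp (-r * N * (2 : ℝ) ^ (((L : ℝ) - 1) / N))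
  have hsolver_le : ‖I y - ut y‖ ≤ E :=
    (hsolver y).trans <| one_div_mul_mul_le_of_le_mul_div (Real.sqrt_pos.mpr hβ) (by positivity)
      (by rwa [mul_assoc] at hτ)
  calc e y ≤ Real.sqrt α * ‖u y - ut y‖ := hE y
    _ ≤ Real.sqrt α * (2 * E) := by
      gcongr
      exact norm_sub_le_two_mul_of_le (hinterp y) hsolver_le
    _ = 2 * Real.sqrt α * Csc * Real.exp (-r * N * (2 : ℝ) ^ (((L : ℝ) - 1) / N)) := by ring

/-- Accelerated initial-vector energy-norm error (key step of Lemma 4.7): under the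
interpolation error bound, the amplified solver error bound, and the tolerance
condition on `τ`, the accelerated initial guess satisfies
`‖c(y) - c⁽⁰⁾(y)‖_{A(y)} ≤ 2√α·C_sc·e^{-rN·2^{(L-1)/N}}` for every `y`. -/
theorem accel_initial_energy_error {Γ : Type*} {W : Type*} [NormedAddCommGroup W]
    (u I ut : Γ → W) (e : Γ → ℝ) (α β Csc r τ : ℝ) (N L : ℕ)
    (hβ : 0 < β) (hα : 0 ≤ α) (hCsc : 0 ≤ Csc) (hN : 1 ≤ N) (hL : 1 ≤ L)
    (hinterp : ∀ y : Γ, ‖u y - I y‖ ≤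
      Csc * Real.exp (-r * N * (2 : ℝ) ^ (((L : ℝ) - 1) / N)))
    (hsolver : ∀ y : Γ, ‖I y - ut y‖ ≤
      (1 / Real.sqrt β) * ((L : ℝ) + 1) ^ (2 * N) * τ)
    (hτ : τ ≤ Real.sqrt β * Csc * Real.exp (-r * N * (2 : ℝ) ^ (((L : ℝ) - 1) / N)) /
      ((L : ℝ) + 1) ^ (2 * N))
    (hE : ∀ y : Γ, e y ≤ Real.sqrt α * ‖u y - ut y‖) :
    ∀ y : Γ, e y ≤ 2 * Real.sqrt α * Csc *
      Real.exp (-r * N * (2 : ℝ) ^ (((L : ℝ) - 1) / N)) :=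
  accel_initial_energy_error_general u I ut e α β Csc r τ N L hβ hinterp hsolver hτ hE
end
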